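/- arXiv:1910.12079 — 3 statements merged into one kernel-verified Lean document; each statement's English description precedes it below -/
import Mathlib

section
/- If φ satisfies the Bowen property at scale ε₀ on C (i.e. V(C,φ,ε₀) := sup{|Φ(x,n) − Φ(y,n)| : (x,n) ∈ C, y ∈ B_n(x,ε₀)} < ∞), then P(C,φ,δ,ε₀) = P(C,φ,δ) for every δ > 0. -/
open Filter Topology

/-- Birkhoff sum `Φ(x,n) = Σ_{k=0}^{n-1} φ(f^k x)`. -/
noncomputable def birk {X : Type*} (f : X → X) (φ : X → ℝ) (x : X) (n : ℕ) : ℝ :=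
  ∑ k ∈ Finset.range n, φ (f^[k] x)

/-- The variation of a potential at scale ε. -/
noncomputable def varphi {X : Type*} [MetricSpace X] (φ : X → ℝ) (ε : ℝ) : ℝ :=
  sSup {v | ∃ x y : X, dist x y ≤ ε ∧ v = |φ x - φ y|}

/-- `E` is an `(n,δ)`-separated set. -/
def IsSep {X : Type*} [MetricSpace X] (f : X → X) (n : ℕ) (δ : ℝ) (E : Finset X) : Prop :=
  ∀ x ∈ E, ∀ y ∈ E, x ≠ y → ∃ k < n, δ < dist (f^[k] x) (f^[k] y)

/-- `Φ(x,n,ε) = sup { Φ(y,n) : y ∈ closed Bowen ball B_n(x,ε) }`; for `ε = 0` this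
equals `Φ(x,n)`. -/
noncomputable def phiSup {X : Type*} [MetricSpace X] (f : X → X) (φ : X → ℝ)
    (x : X) (n : ℕ) (ε : ℝ) : ℝ :=
  sSup {s | ∃ y : X, (∀ k < n, dist (f^[k] x) (f^[k] y) ≤ ε) ∧ s = birk f φ y n}

/-- Partition function `Θ(C,φ,n,δ,ε)` over `(n,δ)`-separated subsets of the section
`C^(n)`. -/
noncomputable def Theta {X : Type*} [MetricSpace X] (f : X → X) (φ : X → ℝ)
    (C : Set (X × ℕ)) (n : ℕ) (δ ε : ℝ) : ℝ :=
  sSup {s | ∃ E : Finset X, (∀ x ∈ E, (x, n) ∈ C) ∧ IsSep f n δ E ∧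
    s = ∑ x ∈ E, Real.exp (phiSup f φ x n ε)}

/-- The pressure `P(C,φ,δ,ε) = limsup_n (1/n) ln Θ(C,φ,n,δ,ε)`. -/
noncomputable def Pres {X : Type*} [MetricSpace X] (f : X → X) (φ : X → ℝ)
    (C : Set (X × ℕ)) (δ ε : ℝ) : ℝ :=
  Filter.limsup (fun n : ℕ => Real.log (Theta f φ C n δ ε) / n) Filter.atTop

/-- The topological pressure `P(φ) = lim_{δ→0} P(X×ℕ, φ, δ) = sup_{δ>0} P(X×ℕ, φ, δ)`. -/
noncomputable def PresTop {X : Type*} [MetricSpace X] (f : X → X) (φ : X → ℝ) : ℝ :=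
  ⨆ δ : {d : ℝ // 0 < d}, Pres f φ Set.univ (δ : ℝ) 0

/-!
The Bowen property gives a constant `V` with `Φ(x,n) ≤ Φ(x,n,ε₀) ≤ Φ(x,n) + V` for `(x,n) ∈ C`,
hence `Θ(C,φ,n,δ) ≤ Θ(C,φ,n,δ,ε₀) ≤ e^V Θ(C,φ,n,δ)`. The two sequences `(1/n) ln Θ` then
differ by at most `V/n → 0`, so their limsups agree. Both comparisons survive the junk values:
`sSup` of a set of reals that is unbounded above is `0`, and so is the `limsup` of a real
sequence that is unbounded above or tends to `-∞`.
-/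

open Set

namespace Real

variable {A B : Set ℝ}

theorem sInf_le_sInf_of_forall_add_mem (hAB : ∀ a ∈ A, ∀ η > 0, a + η ∈ B)
    (hBA : ∀ b ∈ B, ∀ η > 0, b + η ∈ A) : sInf A ≤ sInf B := by
  rcases B.eq_empty_or_nonempty with rfl | hB
  · have hA : A = ∅ := eq_empty_of_forall_notMem fun a ha => hAB a ha 1 one_pos
    simp [hA]
  by_cases hBb : BddBelow B
  · obtain ⟨c, hc⟩ := hBb
    have hAb : BddBelow A := ⟨c - 1, fun a ha => by linarith [hc (hAB a ha 1 one_pos)]⟩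
    refine le_of_forall_pos_le_add fun η hη => ?_
    rw [← sub_le_iff_le_add]
    exact le_csInf hB fun b hb => sub_le_iff_le_add.2 (csInf_le hAb (hBA b hb η hη))
  · have hAb : ¬BddBelow A := fun ⟨c, hc⟩ =>
      hBb ⟨c - 1, fun b hb => by linarith [hc (hBA b hb 1 one_pos)]⟩
    rw [sInf_of_not_bddBelow hAb, sInf_of_not_bddBelow hBb]

theorem sInf_eq_of_forall_add_mem (hAB : ∀ a ∈ A, ∀ η > 0, a + η ∈ B)
    (hBA : ∀ b ∈ B, ∀ η > 0, b + η ∈ A) : sInf A = sInf B :=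
  (sInf_le_sInf_of_forall_add_mem hAB hBA).antisymm (sInf_le_sInf_of_forall_add_mem hBA hAB)

theorem iSup_le_iSup_and_le_mul_iSup {ι : Sort*} {F G : ι → ℝ} {c : ℝ} (hc : 0 ≤ c)
    (hGF : ∀ i, G i ≤ F i) (hFG : ∀ i, F i ≤ c * G i) :
    ⨆ i, G i ≤ ⨆ i, F i ∧ ⨆ i, F i ≤ c * ⨆ i, G i := by
  by_cases hG : BddAbove (range G)
  · obtain ⟨b, hb⟩ := hG
    have hF : BddAbove (range F) := ⟨c * b, by
      rintro _ ⟨i, rfl⟩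
      exact (hFG i).trans (mul_le_mul_of_nonneg_left (hb ⟨i, rfl⟩) hc)⟩
    refine ⟨ciSup_mono hF hGF, (mul_iSup_of_nonneg hc G).symm ▸ ciSup_mono ?_ hFG⟩
    exact ⟨c * b, by rintro _ ⟨i, rfl⟩; exact mul_le_mul_of_nonneg_left (hb ⟨i, rfl⟩) hc⟩
  · have hF : ¬BddAbove (range F) := fun ⟨b, hb⟩ =>
      hG ⟨b, by rintro _ ⟨i, rfl⟩; exact (hGF i).trans (hb ⟨i, rfl⟩)⟩
    simp [iSup_of_not_bddAbove hG, iSup_of_not_bddAbove hF]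

theorem log_sub_log_mem_Icc {a b V : ℝ} (hV : 0 ≤ V) (ha : 0 ≤ a) (hab : a ≤ b)
    (hb : b ≤ exp V * a) : log b - log a ∈ Icc 0 V := by
  rcases ha.eq_or_lt with rfl | ha
  · simp [le_antisymm (by simpa using hb) (hab : 0 ≤ b), hV]
  have hlog : log b ≤ log (exp V * a) := log_le_log (ha.trans_le hab) hb
  rw [log_mul (exp_ne_zero V) ha.ne', log_exp] at hlog
  exact ⟨sub_nonneg.2 (log_le_log ha hab), by linarith⟩

end Real

open Filter

theorem Filter.limsup_eq_of_tendsto_sub {α : Type*} {l : Filter α} {u v : α → ℝ}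
    (h : Tendsto (u - v) l (𝓝 0)) : limsup u l = limsup v l := by
  simp only [limsup_eq]
  refine Real.sInf_eq_of_forall_add_mem (fun a ha η hη => ?_) fun b hb η hη => ?_
  · filter_upwards [ha, h.eventually (lt_mem_nhds (neg_lt_zero.2 hη))] with n hn hnη
    simp only [Pi.sub_apply] at hnη
    linarith
  · filter_upwards [hb, h.eventually (gt_mem_nhds hη)] with n hn hnη
    simp only [Pi.sub_apply] at hnη
    linarith

section Pressure

variable {X : Type*} [MetricSpace X] (f : X → X) (φ : X → ℝ)

theorem phiSup_zero (x : X) (n : ℕ) : phiSup f φ x n 0 = birk f φ x n := by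
  have hball : {s | ∃ y : X, (∀ k < n, dist (f^[k] x) (f^[k] y) ≤ 0) ∧ s = birk f φ y n}
      = {birk f φ x n} := by
    ext s
    constructor
    · rintro ⟨y, hy, rfl⟩
      exact Finset.sum_congr rfl fun k hk => by
        rw [dist_le_zero.1 (hy k (Finset.mem_range.1 hk))]
    · rintro rfl
      exact ⟨x, fun k _ => dist_self _ |>.le, rfl⟩
  rw [phiSup, hball, csSup_singleton]

theorem phiSup_mem_Icc {x : X} {n : ℕ} {ε V : ℝ} (hε : 0 ≤ ε)
    (hV : ∀ y, (∀ k < n, dist (f^[k] x) (f^[k] y) ≤ ε) → birk f φ y n ≤ birk f φ x n + V) :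
    phiSup f φ x n ε ∈ Icc (birk f φ x n) (birk f φ x n + V) := by
  have hx : birk f φ x n ∈
      {s | ∃ y : X, (∀ k < n, dist (f^[k] x) (f^[k] y) ≤ ε) ∧ s = birk f φ y n} :=
    ⟨x, fun k _ => (dist_self _).trans_le hε, rfl⟩
  have hle : ∀ s ∈ {s | ∃ y : X, (∀ k < n, dist (f^[k] x) (f^[k] y) ≤ ε) ∧ s = birk f φ y n},
      s ≤ birk f φ x n + V := by
    rintro s ⟨y, hy, rfl⟩
    exact hV y hy
  exact ⟨le_csSup ⟨_, hle⟩ hx, csSup_le ⟨_, hx⟩ hle⟩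

theorem theta_eq_iSup (C : Set (X × ℕ)) (n : ℕ) (δ ε : ℝ) :
    Theta f φ C n δ ε = ⨆ E : {E : Finset X // (∀ x ∈ E, (x, n) ∈ C) ∧ IsSep f n δ E},
      ∑ x ∈ (E : Finset X), Real.exp (phiSup f φ x n ε) := by
  rw [Theta, iSup]
  congr 1
  ext s
  constructor
  · rintro ⟨E, hC, hsep, rfl⟩
    exact ⟨⟨E, hC, hsep⟩, rfl⟩
  · rintro ⟨⟨E, hC, hsep⟩, rfl⟩
    exact ⟨E, hC, hsep, rfl⟩

theorem theta_zero_le_and_le_exp_mul {C : Set (X × ℕ)} {n : ℕ} (δ : ℝ) {ε V : ℝ}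
    (hphi : ∀ x, (x, n) ∈ C → phiSup f φ x n ε ∈ Icc (birk f φ x n) (birk f φ x n + V)) :
    Theta f φ C n δ 0 ≤ Theta f φ C n δ ε ∧
      Theta f φ C n δ ε ≤ Real.exp V * Theta f φ C n δ 0 := by
  simp only [theta_eq_iSup, phiSup_zero]
  refine Real.iSup_le_iSup_and_le_mul_iSup (Real.exp_pos V).le
    (fun E => Finset.sum_le_sum fun x hx => ?_) fun E => ?_
  · exact Real.exp_le_exp.2 (hphi x (E.2.1 x hx)).1
  · rw [Finset.mul_sum]
    refine Finset.sum_le_sum fun x hx => ?_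
    rw [← Real.exp_add, add_comm V]
    exact Real.exp_le_exp.2 (hphi x (E.2.1 x hx)).2

theorem theta_nonneg (C : Set (X × ℕ)) (n : ℕ) (δ ε : ℝ) : 0 ≤ Theta f φ C n δ ε := by
  rw [theta_eq_iSup]
  exact Real.iSup_nonneg fun E => Finset.sum_nonneg fun x _ => (Real.exp_pos _).le

theorem pres_eq_of_theta_le_exp_mul {C : Set (X × ℕ)} {δ ε V : ℝ} (hV : 0 ≤ V)
    (hTheta : ∀ n, Theta f φ C n δ 0 ≤ Theta f φ C n δ ε ∧
      Theta f φ C n δ ε ≤ Real.exp V * Theta f φ C n δ 0) :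
    Pres f φ C δ ε = Pres f φ C δ 0 := by
  refine limsup_eq_of_tendsto_sub (tendsto_of_tendsto_of_tendsto_of_le_of_le
    tendsto_const_nhds (tendsto_const_div_atTop_nhds_zero_nat V) (fun n => ?_) fun n => ?_)
  all_goals
    have hlog := Real.log_sub_log_mem_Icc hV (theta_nonneg f φ C n δ 0) (hTheta n).1 (hTheta n).2
    simp only [Pi.sub_apply, ← sub_div]
  · exact div_nonneg hlog.1 n.cast_nonneg
  · exact div_le_div_of_nonneg_right hlog.2 n.cast_nonneg

end Pressure

theorem pres_eq_of_bowen_property_general {X : Type*} [MetricSpace X]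
    (f : X → X) (φ : X → ℝ)
    (C : Set (X × ℕ)) (ε₀ : ℝ) (hε₀ : 0 < ε₀)
    (hBowen : BddAbove {v | ∃ x : X, ∃ n : ℕ, (x, n) ∈ C ∧ ∃ y : X,
      (∀ k < n, dist (f^[k] x) (f^[k] y) ≤ ε₀) ∧ v = |birk f φ x n - birk f φ y n|}) :
    ∀ δ : ℝ, 0 < δ → Pres f φ C δ ε₀ = Pres f φ C δ 0 := by
  intro δ _
  obtain ⟨V, hV0, hV⟩ := hBowen.exists_ge 0
  refine pres_eq_of_theta_le_exp_mul f φ hV0 fun n =>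
    theta_zero_le_and_le_exp_mul f φ δ fun x hx => phiSup_mem_Icc f φ hε₀.le fun y hy => ?_
  have hxy := (abs_sub_le_iff.1 (hV _ ⟨x, n, hx, y, hy, rfl⟩)).2
  linarith

/-- If `φ` satisfies the Bowen property at scale `ε₀` on `C`, i.e.
`V(C,φ,ε₀) = sup{|Φ(x,n) − Φ(y,n)| : (x,n) ∈ C, y ∈ B_n(x,ε₀)} < ∞`, then
`P(C,φ,δ,ε₀) = P(C,φ,δ)` for every `δ > 0`. -/
theorem pres_eq_of_bowen_property {X : Type*} [MetricSpace X] [CompactSpace X]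
    (f : X → X) (hf : Continuous f) (φ : X → ℝ) (hφ : Continuous φ)
    (C : Set (X × ℕ)) (ε₀ : ℝ) (hε₀ : 0 < ε₀)
    (hBowen : BddAbove {v | ∃ x : X, ∃ n : ℕ, (x, n) ∈ C ∧ ∃ y : X,
      (∀ k < n, dist (f^[k] x) (f^[k] y) ≤ ε₀) ∧ v = |birk f φ x n - birk f φ y n|}) :
    ∀ δ : ℝ, 0 < δ → Pres f φ C δ ε₀ = Pres f φ C δ 0 :=
  pres_eq_of_bowen_property_general f φ C ε₀ hε₀ hBowen
end

section
/- For sequences C, C' in E and gap sequences r, r' with t_n(r) = t_n(r') and x_n(C) ≠ x_n(C'), if y δ-traces (C,r) and y' δ-traces (C',r'), and E is (N,2γ)-separated with 2δ < γ, then y and y' are (n(N+τ), γ)-separated, i.e. max_{0≤k<n(N+τ)} d(f^k(y), f^k(y')) > γ. -/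
open Filter Topology

/-- The transition times `t_k = Σ_{i<k} (N + r_i)` (so `t_0 = 0`). -/
def ttime (N : ℕ) (r : ℕ → ℕ) (k : ℕ) : ℕ :=
  ∑ i ∈ Finset.range k, (N + r i)

/-- `z` δ-traces the sequence of orbit segments `(C k, N)` with gaps `r`:
`d(f^{t_k + j} z, f^j (C k)) ≤ δ` for all `k` and `0 ≤ j < N`. -/
def Traces {X : Type*} [MetricSpace X] (f : X → X) (N : ℕ) (δ : ℝ)
    (C : ℕ → X) (r : ℕ → ℕ) (z : X) : Prop :=
  ∀ k, ∀ j < N, dist (f^[ttime N r k + j] z) (f^[j] (C k)) ≤ δ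

/-- The set of all δ-tracing points of sequences of length-`N` orbit segments from `E`
with gaps in `{0,…,τ-1}`. -/
def TraceSet {X : Type*} [MetricSpace X] (f : X → X) (E : Finset X) (N τ : ℕ) (δ : ℝ) :
    Set X :=
  {z | ∃ (C : ℕ → X) (r : ℕ → ℕ), (∀ k, C k ∈ E) ∧ (∀ k, r k < τ) ∧ Traces f N δ C r z}

/-! At the common transition time `t_n` the two points shadow the distinct segments `C n` and
`C' n` within `δ`. These are more than `2γ` apart at some `j < N`, so at time `t_n + j`, which is
less than `(n + 1)(N + τ)`, the points are more than `2γ - 2δ > γ` apart. -/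

theorem lt_dist_of_dist_le_of_two_mul_lt {X : Type*} [PseudoMetricSpace X] {a b a' b' : X}
    {δ γ : ℝ} (hδγ : 2 * δ < γ) (hab : 2 * γ < dist a b) (ha : dist a' a ≤ δ)
    (hb : dist b' b ≤ δ) : γ < dist a' b' := by
  have := dist_triangle4 a a' b' b
  rw [dist_comm a a'] at this
  linarith

theorem ttime_le_mul {N τ : ℕ} {r : ℕ → ℕ} (hr : ∀ k, r k ≤ τ) (n : ℕ) :
    ttime N r n ≤ n * (N + τ) :=
  calc ttime N r n ≤ ∑ _i ∈ Finset.range n, (N + τ) :=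
        Finset.sum_le_sum fun i _ => Nat.add_le_add_left (hr i) N
    _ = n * (N + τ) := by simp

theorem ttime_add_lt {N τ k : ℕ} {r : ℕ → ℕ} (hr : ∀ k, r k ≤ τ) (n : ℕ) (hk : k < N) :
    ttime N r n + k < (n + 1) * (N + τ) := by
  have := ttime_le_mul (N := N) hr n
  rw [add_mul, one_mul]
  omega

theorem Traces.lt_dist_of_ttime_eq {X : Type*} [MetricSpace X] {f : X → X} {N : ℕ}
    {δ γ : ℝ} {C C' : ℕ → X} {r r' : ℕ → ℕ} {y y' : X} (hy : Traces f N δ C r y)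
    (hy' : Traces f N δ C' r' y') (hδγ : 2 * δ < γ) {n k : ℕ} (hk : k < N)
    (ht : ttime N r n = ttime N r' n) (hsep : 2 * γ < dist (f^[k] (C n)) (f^[k] (C' n))) :
    γ < dist (f^[ttime N r n + k] y) (f^[ttime N r n + k] y') := by
  have hy' := hy' n k hk
  rw [← ht] at hy'
  exact lt_dist_of_dist_le_of_two_mul_lt hδγ hsep (hy n k hk) hy'

theorem tracing_points_separated_general {X : Type*} [MetricSpace X]
    (f : X → X) (E : Finset X) (N τ : ℕ)
    (δ γ : ℝ) (hδγ : 2 * δ < γ)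
    (hE : ∀ x ∈ E, ∀ y ∈ E, x ≠ y → ∃ k < N, 2 * γ < dist (f^[k] x) (f^[k] y))
    (C C' : ℕ → X) (hC : ∀ k, C k ∈ E) (hC' : ∀ k, C' k ∈ E)
    (r r' : ℕ → ℕ) (hr : ∀ k, r k < τ)
    (y y' : X) (hy : Traces f N δ C r y) (hy' : Traces f N δ C' r' y')
    (n : ℕ) (ht : ttime N r n = ttime N r' n) (hne : C n ≠ C' n) :
    ∃ k < (n + 1) * (N + τ), γ < dist (f^[k] y) (f^[k] y') := by
  obtain ⟨k, hkN, hsep⟩ := hE _ (hC n) _ (hC' n) hne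
  exact ⟨ttime N r n + k, ttime_add_lt (fun i => (hr i).le) n hkN,
    hy.lt_dist_of_ttime_eq hy' hδγ hkN ht hsep⟩

/-- If `E` is `(N,2γ)`-separated, `2δ < γ`, `y` δ-traces `(C,r)`, `y'` δ-traces `(C',r')`,
the transition times agree at index `n` while `C n ≠ C' n`, then `y` and `y'` are
`((n+1)(N+τ), γ)`-separated. -/
theorem tracing_points_separated {X : Type*} [MetricSpace X]
    (f : X → X) (hf : Continuous f) (E : Finset X) (N τ : ℕ) (hN : 1 ≤ N) (hτ : 1 ≤ τ)
    (δ γ : ℝ) (hδ : 0 < δ) (hδγ : 2 * δ < γ)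
    (hE : ∀ x ∈ E, ∀ y ∈ E, x ≠ y → ∃ k < N, 2 * γ < dist (f^[k] x) (f^[k] y))
    (C C' : ℕ → X) (hC : ∀ k, C k ∈ E) (hC' : ∀ k, C' k ∈ E)
    (r r' : ℕ → ℕ) (hr : ∀ k, r k < τ) (hr' : ∀ k, r' k < τ)
    (y y' : X) (hy : Traces f N δ C r y) (hy' : Traces f N δ C' r' y')
    (n : ℕ) (ht : ttime N r n = ttime N r' n) (hne : C n ≠ C' n) :
    ∃ k < (n + 1) * (N + τ), γ < dist (f^[k] y) (f^[k] y') :=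
  tracing_points_separated_general f E N τ δ γ hδγ hE C C' hC hC' r r' hr y y' hy hy' n ht hne
end

section
/- Fix sequences y_1,…,y_n ∈ X and gaps w_1,…,w_{n-1} ∈ {0,…,τ-1}, and let W be the set of points z such that d(f^{t_k+j}(z), f^j(y_k)) ≤ δ for all 1 ≤ k ≤ n and 0 ≤ j < N, where t_k = Σ_{i<k}(N+w_i). Then any (nN, 2δ)-separated subset of W has cardinality at most s(X,τ,δ)^{n-1}, where s(X,τ,δ) is the maximal cardinality of a (τ,δ)-separated set in X. -/
/-!
A maximal `(τ, δ)`-separated set `S₀` is `(τ, δ)`-spanning, so every point `x` has a shadow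
`c x ∈ S₀` whose orbit stays `δ`-close to that of `x` for `τ` steps. Code a point of `W` by the
shadows of its orbit at the starts of the `n - 1` gaps. Before time `nN` every time lies in a
tracing block, where two points of `W` are `2δ`-close because both follow the same `y_k`, or in a
gap of length `< τ`, where two points with the same code are `2δ`-close because both follow the
common shadow. Hence distinct points of an `(nN, 2δ)`-separated subset of `W` have distinct codes.
-/

open Filter Topology

open Finset

namespace IsSep

variable {X : Type*} [MetricSpace X] {f : X → X} {n : ℕ} {δ : ℝ} {E : Finset X}

theorem insert [DecidableEq X] (hE : IsSep f n δ E) {x : X}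
    (hx : ∀ s ∈ E, ∃ k < n, δ < dist (f^[k] x) (f^[k] s)) :
    IsSep f n δ (insert x E) := by
  intro a ha b hb hab
  rcases mem_insert.mp ha with rfl | haE <;> rcases mem_insert.mp hb with rfl | hbE
  · exact absurd rfl hab
  · exact hx b hbE
  · simpa only [dist_comm] using hx a haE
  · exact hE a haE b hbE hab

theorem exists_mem_forall_dist_le (hδ : 0 ≤ δ) (hE : IsSep f n δ E)
    (hmax : ∀ S : Finset X, IsSep f n δ S → S.card ≤ E.card) (x : X) :
    ∃ s ∈ E, ∀ j < n, dist (f^[j] x) (f^[j] s) ≤ δ := by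
  classical
  by_contra! hfar
  have hx : x ∉ E := fun hxE => by
    obtain ⟨j, -, hj⟩ := hfar x hxE
    simp only [dist_self] at hj
    linarith
  have := hmax _ (hE.insert hfar)
  rw [card_insert_of_notMem hx] at this
  omega

end IsSep

/-- The time `t_k` of the statement: each block of length `N` is followed by a gap of length
`w i`. -/
def blockStart (N : ℕ) (w : ℕ → ℕ) (k : ℕ) : ℕ :=
  ∑ i ∈ range k, (N + w i)

section blockStart

variable {N : ℕ} {w : ℕ → ℕ}

theorem blockStart_succ (k : ℕ) : blockStart N w (k + 1) = blockStart N w k + N + w k := by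
  simp only [blockStart, sum_range_succ, add_assoc]

theorem mul_le_blockStart (k : ℕ) : k * N ≤ blockStart N w k :=
  calc k * N = ∑ _i ∈ range k, N := by rw [sum_const, card_range, smul_eq_mul]
    _ ≤ blockStart N w k := sum_le_sum fun i _ => Nat.le_add_right N (w i)

theorem exists_block_or_gap {k m : ℕ} (hm : m < blockStart N w k + N) :
    (∃ i ≤ k, ∃ j < N, m = blockStart N w i + j) ∨
      ∃ i < k, ∃ j < w i, m = blockStart N w i + N + j := by
  induction k with
  | zero => exact .inl ⟨0, le_rfl, m, by simpa [blockStart] using hm, by simp [blockStart]⟩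
  | succ k ih =>
    rw [blockStart_succ] at hm
    by_cases hblock : m < blockStart N w k + N
    · rcases ih hblock with ⟨i, hi, hblock⟩ | ⟨i, hi, hgap⟩
      · exact .inl ⟨i, by omega, hblock⟩
      · exact .inr ⟨i, by omega, hgap⟩
    by_cases hgap : m < blockStart N w k + N + w k
    · exact .inr ⟨k, k.lt_succ_self, m - (blockStart N w k + N), by omega, by omega⟩
    · refine .inl ⟨k + 1, le_rfl, m - (blockStart N w k + N + w k), by omega, ?_⟩
      rw [blockStart_succ]
      omega

theorem exists_block_or_gap_of_lt_mul {n m : ℕ} (hm : m < n * N) :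
    (∃ k < n, ∃ j < N, m = blockStart N w k + j) ∨
      ∃ k < n - 1, ∃ j < w k, m = blockStart N w k + N + j := by
  obtain ⟨n, rfl⟩ : ∃ n', n = n' + 1 := Nat.exists_eq_succ_of_ne_zero (by rintro rfl; simp at hm)
  have : m < blockStart N w n + N := by
    have := mul_le_blockStart (N := N) (w := w) n
    rw [Nat.succ_mul] at hm
    omega
  rcases exists_block_or_gap this with ⟨k, hk, hblock⟩ | ⟨k, hk, hgap⟩
  · exact .inl ⟨k, by omega, hblock⟩
  · exact .inr ⟨k, by omega, hgap⟩

end blockStart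

/-- The set `W` of the statement. -/
def traceCylinder {X : Type*} [MetricSpace X] (f : X → X) (N : ℕ) (w : ℕ → ℕ) (y : ℕ → X)
    (n : ℕ) (δ : ℝ) : Set X :=
  {z | ∀ k < n, ∀ j < N, dist (f^[blockStart N w k + j] z) (f^[j] (y k)) ≤ δ}

theorem dist_iterate_le_of_mem_traceCylinder {X : Type*} [MetricSpace X] {f : X → X}
    {N τ n : ℕ} {δ : ℝ} {y : ℕ → X} {w : ℕ → ℕ} {c : X → X}
    (hc : ∀ x, ∀ j < τ, dist (f^[j] x) (f^[j] (c x)) ≤ δ) (hw : ∀ i < n - 1, w i < τ)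
    {z z' : X} (hz : z ∈ traceCylinder f N w y n δ) (hz' : z' ∈ traceCylinder f N w y n δ)
    (hcode : ∀ k < n - 1, c (f^[blockStart N w k + N] z) = c (f^[blockStart N w k + N] z'))
    {m : ℕ} (hm : m < n * N) :
    dist (f^[m] z) (f^[m] z') ≤ 2 * δ := by
  rcases exists_block_or_gap_of_lt_mul (w := w) hm with ⟨k, hk, j, hj, rfl⟩ | ⟨k, hk, j, hj, rfl⟩
  · linarith [dist_triangle_right (f^[blockStart N w k + j] z) (f^[blockStart N w k + j] z')
      (f^[j] (y k)), hz k hk j hj, hz' k hk j hj]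
  · have hsplit : ∀ x, f^[blockStart N w k + N + j] x = f^[j] (f^[blockStart N w k + N] x) :=
      fun x => by rw [add_comm _ j, Function.iterate_add_apply]
    rw [hsplit, hsplit]
    set u := f^[blockStart N w k + N] z
    set u' := f^[blockStart N w k + N] z'
    have hjτ : j < τ := hj.trans (hw k hk)
    have hu' := hc u' j hjτ
    rw [← hcode k hk] at hu'
    linarith [dist_triangle_right (f^[j] u) (f^[j] u') (f^[j] (c u)), hc u j hjτ]

theorem card_separated_in_traceCylinder_le_general {X : Type*} [MetricSpace X]
    (f : X → X) (N τ n : ℕ)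
    (δ : ℝ) (hδ : 0 < δ)
    (S₀ : Finset X) (hS₀ : IsSep f τ δ S₀)
    (hS₀max : ∀ S : Finset X, IsSep f τ δ S → S.card ≤ S₀.card)
    (y : ℕ → X) (w : ℕ → ℕ) (hw : ∀ i < n - 1, w i < τ)
    (Q : Finset X)
    (hQW : ∀ z ∈ Q, ∀ k < n, ∀ j < N,
      dist (f^[(∑ i ∈ Finset.range k, (N + w i)) + j] z) (f^[j] (y k)) ≤ δ)
    (hQsep : IsSep f (n * N) (2 * δ) Q) :
    Q.card ≤ S₀.card ^ (n - 1) := by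
  choose c hcS₀ hc using hS₀.exists_mem_forall_dist_le hδ.le hS₀max
  let code : Q → Fin (n - 1) → S₀ := fun z k => ⟨c (f^[blockStart N w k + N] z), hcS₀ _⟩
  have hcode : Function.Injective code := by
    intro z z' hzz'
    by_contra hne
    obtain ⟨m, hm, hfar⟩ := hQsep z z.2 z' z'.2 (Subtype.coe_ne_coe.mpr hne)
    have := dist_iterate_le_of_mem_traceCylinder hc hw (hQW z z.2) (hQW z' z'.2)
      (fun k hk => congrArg Subtype.val (congrFun hzz' ⟨k, hk⟩)) hm
    linarith
  simpa using Fintype.card_le_of_injective code hcode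

/-- Any `(nN, 2δ)`-separated subset of the set `W` of points tracing the fixed
segments `y_1,…,y_n` with fixed gaps `w_1,…,w_{n-1} ∈ {0,…,τ-1}` has cardinality at
most `s(X,τ,δ)^{n-1}`, where `s(X,τ,δ)` is the maximal cardinality of a
`(τ,δ)`-separated set (realized by `S₀`). -/
theorem card_separated_in_traceCylinder_le {X : Type*} [MetricSpace X] [CompactSpace X]
    (f : X → X) (hf : Continuous f) (N τ n : ℕ) (hN : 1 ≤ N) (hτ : 1 ≤ τ) (hn : 1 ≤ n)
    (δ : ℝ) (hδ : 0 < δ)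
    (S₀ : Finset X) (hS₀ : IsSep f τ δ S₀)
    (hS₀max : ∀ S : Finset X, IsSep f τ δ S → S.card ≤ S₀.card)
    (y : ℕ → X) (w : ℕ → ℕ) (hw : ∀ i < n - 1, w i < τ)
    (Q : Finset X)
    (hQW : ∀ z ∈ Q, ∀ k < n, ∀ j < N,
      dist (f^[(∑ i ∈ Finset.range k, (N + w i)) + j] z) (f^[j] (y k)) ≤ δ)
    (hQsep : IsSep f (n * N) (2 * δ) Q) :
    Q.card ≤ S₀.card ^ (n - 1) :=
  card_separated_in_traceCylinder_le_general f N τ n δ hδ S₀ hS₀ hS₀max y w hw Q hQW hQsep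
end
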